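/- (Lemma 1, at +∞, explicit form.) The multi-head attention output tends to a single linear function as x → +∞: Attn(x) − (x·A + B) → 0 in ℝ^d as x → +∞, where A = ∑_{h : α_h > 0} ζ_h + (1/(p+1))·∑_{h : α_h = 0} ζ_h and B = (min_{1 ≤ j ≤ p} x_j)·∑_{h : α_h < 0} ζ_h + ((∑_{j=1}^p x_j)/(p+1))·∑_{h : α_h = 0} ζ_h. -/

import Mathlib

/-
Each head is a softmax average of the values x₁, …, x_p, x with weights e^{α x v}. Multiplying
numerator and denominator by e^{-α x c}, where c is the value of largest score (c = x for α > 0,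
c = min xⱼ for α < 0), writes A_α(x) - c as a quotient whose denominator is at least 1 (the term of
c itself is e⁰) and whose numerator is a sum of terms y e^{α x y} with y = 0 or α x y → -∞, each
tending to 0. For α = 0 the head is exactly the mean (x + ∑ xⱼ)/(p + 1). Summing over the heads
gives x • A + B.
-/

open Filter Real
open scoped Classical

/-- Denominator of the softmax attention: `D_α(x) = exp(α x²) + ∑ₖ exp(α x xₖ)`. -/
noncomputable def attnDenom (p : ℕ) (xs : Fin p → ℝ) (α : ℝ) (x : ℝ) : ℝ :=
  Real.exp (α * x ^ 2) + ∑ k, Real.exp (α * x * xs k)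

/-- Single-head softmax attention output
`A_α(x) = (∑ⱼ xⱼ exp(α x xⱼ) + x exp(α x²)) / D_α(x)`. -/
noncomputable def attnOut (p : ℕ) (xs : Fin p → ℝ) (α : ℝ) (x : ℝ) : ℝ :=
  (∑ j, xs j * Real.exp (α * x * xs j) + x * Real.exp (α * x ^ 2)) / attnDenom p xs α x

/-- Multi-head attention output `Attn(x) = ∑ₕ A_{αₕ}(x) • ζₕ` with values in ℝ^d. -/
noncomputable def multiAttn (p : ℕ) (xs : Fin p → ℝ) (H d : ℕ) (αs : Fin H → ℝ)
    (ζ : Fin H → EuclideanSpace ℝ (Fin d)) (x : ℝ) : EuclideanSpace ℝ (Fin d) :=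
  ∑ h, attnOut p xs (αs h) x • ζ h

lemma tendsto_mul_exp_atBot : Tendsto (fun u : ℝ => u * exp u) atBot (nhds 0) := by
  have h := ((tendsto_pow_mul_exp_neg_atTop_nhds_zero 1).comp tendsto_neg_atBot_atTop).neg
  simpa [Function.comp_def] using h

-- `y = (α x)⁻¹ · (α x y)`, and `u eᵘ → 0` as `u → -∞`.
lemma tendsto_mul_exp_mul_mul {α : ℝ} {y : ℝ → ℝ}
    (hy : Tendsto (fun x => α * x * y x) atTop atBot) :
    Tendsto (fun x => y x * exp (α * x * y x)) atTop (nhds 0) := by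
  have hinv : Tendsto (fun x : ℝ => α⁻¹ * x⁻¹) atTop (nhds 0) := by
    simpa using tendsto_inv_atTop_zero.const_mul α⁻¹
  have h := hinv.mul (tendsto_mul_exp_atBot.comp hy)
  rw [zero_mul] at h
  refine h.congr' ?_
  by_cases hα : α = 0
  · exact absurd (by simpa [hα] using hy) (not_tendsto_const_atBot (0 : ℝ) atTop)
  filter_upwards [eventually_ne_atTop 0] with x hx
  simp only [Function.comp_apply]
  field_simp

/-- Numerator of `A_α(x) - c` after multiplying numerator and denominator of `A_α` by `e^{-α x c}`. -/
noncomputable def centredNum (p : ℕ) (xs : Fin p → ℝ) (α c x : ℝ) : ℝ :=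
  ∑ j, (xs j - c) * exp (α * x * (xs j - c)) + (x - c) * exp (α * x * (x - c))

noncomputable def centredDenom (p : ℕ) (xs : Fin p → ℝ) (α c x : ℝ) : ℝ :=
  ∑ j, exp (α * x * (xs j - c)) + exp (α * x * (x - c))

section Centred

variable {p : ℕ} (xs : Fin p → ℝ) (α c x : ℝ)

lemma attnDenom_pos : 0 < attnDenom p xs α x := by
  unfold attnDenom
  positivity

lemma exp_mul_sub (a : ℝ) : exp (α * x * (a - c)) = exp (α * x * a) * exp (-(α * x * c)) := by
  rw [← Real.exp_add]
  ring_nf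

lemma centredDenom_eq : centredDenom p xs α c x = attnDenom p xs α x * exp (-(α * x * c)) := by
  simp only [centredDenom, attnDenom, exp_mul_sub, ← Finset.sum_mul]
  ring_nf

lemma centredNum_eq :
    centredNum p xs α c x =
      (∑ j, xs j * exp (α * x * xs j) + x * exp (α * x ^ 2) - c * attnDenom p xs α x) *
        exp (-(α * x * c)) := by
  have hsum : ∑ j, (xs j - c) * (exp (α * x * xs j) * exp (-(α * x * c))) =
      (∑ j, xs j * exp (α * x * xs j) - c * ∑ j, exp (α * x * xs j)) * exp (-(α * x * c)) := by
    rw [Finset.mul_sum, ← Finset.sum_sub_distrib, Finset.sum_mul]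
    exact Finset.sum_congr rfl fun j _ => by ring
  simp only [centredNum, attnDenom, exp_mul_sub, hsum, show α * x * x = α * x ^ 2 by ring]
  ring

lemma attnOut_sub_eq_div : attnOut p xs α x - c = centredNum p xs α c x / centredDenom p xs α c x := by
  rw [centredNum_eq, centredDenom_eq, mul_div_mul_right _ _ (exp_ne_zero _), sub_div,
    mul_div_cancel_right₀ _ (attnDenom_pos xs α x).ne', attnOut]

lemma one_le_centredDenom_self : 1 ≤ centredDenom p xs α x x := by
  rw [centredDenom, sub_self, mul_zero, exp_zero, le_add_iff_nonneg_left]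
  positivity

lemma one_le_centredDenom_of_eq {j : Fin p} (hj : xs j = c) : 1 ≤ centredDenom p xs α c x := by
  have hle : exp (α * x * (xs j - c)) ≤ ∑ k, exp (α * x * (xs k - c)) :=
    Finset.single_le_sum (f := fun k => exp (α * x * (xs k - c))) (fun k _ => (exp_pos _).le) (Finset.mem_univ j)
  rw [hj, sub_self, mul_zero, exp_zero] at hle
  rw [centredDenom]
  linarith [exp_pos (α * x * (x - c))]

end Centred

section Heads

variable {p : ℕ} (xs : Fin p → ℝ) {α : ℝ}

lemma abs_attnOut_sub_le {c x : ℝ} (h : 1 ≤ centredDenom p xs α c x) :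
    |attnOut p xs α x - c| ≤ |centredNum p xs α c x| := by
  rw [attnOut_sub_eq_div, abs_div, abs_of_pos (a := centredDenom p xs α c x) (by linarith)]
  exact div_le_self (abs_nonneg _) h

lemma tendsto_attnOut_sub {c : ℝ → ℝ} (hden : ∀ᶠ x in atTop, 1 ≤ centredDenom p xs α (c x) x)
    (hnum : Tendsto (fun x => centredNum p xs α (c x) x) atTop (nhds 0)) :
    Tendsto (fun x => attnOut p xs α x - c x) atTop (nhds 0) := by
  refine squeeze_zero_norm' ?_ (by simpa using hnum.abs)
  filter_upwards [hden] with x hx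
  exact abs_attnOut_sub_le xs hx

lemma tendsto_attnOut_sub_self_of_pos (hα : 0 < α) :
    Tendsto (fun x => attnOut p xs α x - x) atTop (nhds 0) := by
  refine tendsto_attnOut_sub xs (.of_forall fun x => one_le_centredDenom_self xs α x) ?_
  have hterm (j : Fin p) : Tendsto (fun x => (xs j - x) * exp (α * x * (xs j - x))) atTop (nhds 0) :=
    tendsto_mul_exp_mul_mul <| (tendsto_id.const_mul_atTop hα).atTop_mul_atBot₀
      (tendsto_atBot_add_const_left _ _ tendsto_neg_atTop_atBot)
  simpa [centredNum] using tendsto_finsetSum Finset.univ fun j _ => hterm j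

lemma tendsto_attnOut_of_neg (hα : α < 0) {m : ℝ} (hm : IsLeast (Set.range xs) m) :
    Tendsto (attnOut p xs α) atTop (nhds m) := by
  obtain ⟨⟨j₀, hj₀⟩, hm_le⟩ := hm
  rw [← tendsto_sub_nhds_zero_iff]
  refine tendsto_attnOut_sub xs (.of_forall fun x => one_le_centredDenom_of_eq xs α m x hj₀) ?_
  have hterm (j : Fin p) : Tendsto (fun x => (xs j - m) * exp (α * x * (xs j - m))) atTop (nhds 0) := by
    rcases (hm_le ⟨j, rfl⟩).eq_or_lt with hj | hj
    · simp [← hj]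
    · exact tendsto_mul_exp_mul_mul <|
        (tendsto_id.const_mul_atTop_of_neg hα).atBot_mul_const (sub_pos.mpr hj)
  have hquery : Tendsto (fun x => (x - m) * exp (α * x * (x - m))) atTop (nhds 0) :=
    tendsto_mul_exp_mul_mul <| (tendsto_id.const_mul_atTop_of_neg hα).atBot_mul_atTop₀
      (tendsto_atTop_add_const_right _ _ tendsto_id)
  simpa [centredNum] using (tendsto_finsetSum Finset.univ fun j _ => hterm j).add hquery

lemma attnOut_zero (x : ℝ) : attnOut p xs 0 x = (x + ∑ j, xs j) / (p + 1) := by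
  simp only [attnOut, attnDenom, zero_mul, exp_zero, mul_one, Finset.sum_const, Finset.card_univ,
    Fintype.card_fin, nsmul_eq_mul]
  ring

end Heads

-- `m` plays the role of `min_j xⱼ`.
noncomputable def attnAsymptote (p : ℕ) (xs : Fin p → ℝ) (m α x : ℝ) : ℝ :=
  if 0 < α then x else if α < 0 then m else (x + ∑ j, xs j) / (p + 1)

lemma tendsto_attnOut_sub_attnAsymptote {p : ℕ} (xs : Fin p → ℝ) (α : ℝ) {m : ℝ}
    (hm : IsLeast (Set.range xs) m) :
    Tendsto (fun x => attnOut p xs α x - attnAsymptote p xs m α x) atTop (nhds 0) := by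
  rcases lt_trichotomy α 0 with hα | rfl | hα
  · simpa [attnAsymptote, hα, hα.not_gt] using
      (tendsto_attnOut_of_neg xs hα hm).sub_const m
  · simp [attnAsymptote, attnOut_zero]
  · simpa [attnAsymptote, hα] using tendsto_attnOut_sub_self_of_pos xs hα

lemma sum_attnAsymptote_smul {p H : ℕ} {E : Type*} [AddCommGroup E] [Module ℝ E]
    (xs : Fin p → ℝ) (m : ℝ) (αs : Fin H → ℝ) (ζ : Fin H → E) (x : ℝ) :
    ∑ h, attnAsymptote p xs m (αs h) x • ζ h =
      x • ((∑ h ∈ Finset.univ.filter fun h => 0 < αs h, ζ h) +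
          ((p : ℝ) + 1)⁻¹ • ∑ h ∈ Finset.univ.filter fun h => αs h = 0, ζ h) +
        (m • (∑ h ∈ Finset.univ.filter fun h => αs h < 0, ζ h) +
          ((∑ j, xs j) / ((p : ℝ) + 1)) • ∑ h ∈ Finset.univ.filter fun h => αs h = 0, ζ h) := by
  simp only [Finset.sum_filter, Finset.smul_sum, ← Finset.sum_add_distrib]
  refine Finset.sum_congr rfl fun h _ => ?_
  rcases lt_trichotomy (αs h) 0 with hα | hα | hα
  · simp [attnAsymptote, hα, hα.not_gt, hα.ne]
  · simp only [attnAsymptote, hα, lt_irrefl, if_false, if_true, smul_zero, zero_add]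
    module
  · simp [attnAsymptote, hα, hα.not_gt, hα.ne']

theorem stmt_6_general (p : ℕ) (hp : 1 ≤ p) (xs : Fin p → ℝ) (H d : ℕ)
    (αs : Fin H → ℝ) (ζ : Fin H → EuclideanSpace ℝ (Fin d))
    (A B : EuclideanSpace ℝ (Fin d))
    (hA : A = (∑ h ∈ Finset.univ.filter fun h => 0 < αs h, ζ h) +
      ((p : ℝ) + 1)⁻¹ • ∑ h ∈ Finset.univ.filter fun h => αs h = 0, ζ h)
    (hB : B = (Finset.univ.inf' ⟨⟨0, hp⟩, Finset.mem_univ _⟩ xs) •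
        (∑ h ∈ Finset.univ.filter fun h => αs h < 0, ζ h) +
      ((∑ j, xs j) / ((p : ℝ) + 1)) • ∑ h ∈ Finset.univ.filter fun h => αs h = 0, ζ h) :
    Filter.Tendsto (fun x : ℝ => multiAttn p xs H d αs ζ x - (x • A + B))
      Filter.atTop (nhds 0) := by
  set m := Finset.univ.inf' ⟨⟨0, hp⟩, Finset.mem_univ _⟩ xs
  have hm : IsLeast (Set.range xs) m := by
    obtain ⟨j, -, hj⟩ := Finset.exists_mem_eq_inf' ⟨⟨0, hp⟩, Finset.mem_univ _⟩ xs
    exact ⟨⟨j, hj.symm⟩, Set.forall_mem_range.mpr fun j => Finset.inf'_le _ (Finset.mem_univ j)⟩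
  have hsplit (x : ℝ) : multiAttn p xs H d αs ζ x - (x • A + B) =
      ∑ h, (attnOut p xs (αs h) x - attnAsymptote p xs m (αs h) x) • ζ h := by
    simp only [hA, hB, ← sum_attnAsymptote_smul, multiAttn, ← Finset.sum_sub_distrib, sub_smul]
  simp only [hsplit]
  simpa using tendsto_finsetSum Finset.univ fun h _ =>
    (tendsto_attnOut_sub_attnAsymptote xs (αs h) hm).smul_const (ζ h)

theorem stmt_6 (p : ℕ) (hp : 1 ≤ p) (xs : Fin p → ℝ) (H d : ℕ) (hH : 1 ≤ H) (hd : 1 ≤ d)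
    (αs : Fin H → ℝ) (ζ : Fin H → EuclideanSpace ℝ (Fin d))
    (A B : EuclideanSpace ℝ (Fin d))
    (hA : A = (∑ h ∈ Finset.univ.filter fun h => 0 < αs h, ζ h) +
      ((p : ℝ) + 1)⁻¹ • ∑ h ∈ Finset.univ.filter fun h => αs h = 0, ζ h)
    (hB : B = (Finset.univ.inf' ⟨⟨0, hp⟩, Finset.mem_univ _⟩ xs) •
        (∑ h ∈ Finset.univ.filter fun h => αs h < 0, ζ h) +
      ((∑ j, xs j) / ((p : ℝ) + 1)) • ∑ h ∈ Finset.univ.filter fun h => αs h = 0, ζ h) :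
    Filter.Tendsto (fun x : ℝ => multiAttn p xs H d αs ζ x - (x • A + B))
      Filter.atTop (nhds 0) :=
  stmt_6_general p hp xs H d αs ζ A B hA hB
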